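/- Let a_0, …, a_n be positive integers. The rank κ of the middle-dimensional homology of the Brieskorn manifold Σ(a_0,…,a_n), equal to the coefficient of [1] in ∏_{i=0}^n(a_i E_{a_i} - 1), is given by κ = ∑_{I_s ⊆ I} (-1)^{n+1-s} (∏_{i∈I_s} a_i) / lcm_{i∈I_s} a_i, where I = {0,…,n} and the sum runs over all subsets I_s (including the empty set with convention ∏ = 1, lcm = 1). -/

import Mathlib

/-- The primitive `j`-th root of unity `e^{2πi/j}` as a unit of `ℂ`. -/
noncomputable def zetaU (j : ℕ) : ℂˣ :=
  Units.mk0 (Complex.exp (2 * (Real.pi : ℂ) * Complex.I / (j : ℂ))) (Complex.exp_ne_zero _)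

/-- The averaging element `E_j = (1/j)∑_{k=0}^{j-1}[ζ_j^k]` in the group ring `ℚ[ℂ*]`. -/
noncomputable def Eavg (j : ℕ) : MonoidAlgebra ℚ ℂˣ :=
  (j : ℚ)⁻¹ • ∑ k ∈ Finset.range j, MonoidAlgebra.of ℚ ℂˣ (zetaU j ^ k)

/-! `E_j` is the average `e_H = |H|⁻¹ ∑_{h ∈ H} [h]` over the group `H = μ_j` of `j`-th roots
of unity. In an abelian group `e_H` absorbs every `[h]` with `h ∈ H`; hence if `L = H ⊔ K`, then
`e_L` absorbs `e_H`, `e_K` and `e_H e_K`, which forces `e_H e_K = e_L`. As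
`μ_a ⊔ μ_b = μ_{lcm(a,b)}`, this gives `∏_{i ∈ I} E_{a_i} = E_{lcm_I a}`. Expanding
`∏ (a_i E_{a_i} - 1)` over subsets `I` and using that the coefficient of `[1]` in `E_j` is `1/j`
yields the formula. -/

open Finset MonoidAlgebra

namespace Subgroup

variable {k G : Type*} [Field k] [CommGroup G]

noncomputable def average (H : Subgroup G) [Finite H] : MonoidAlgebra k G :=
  let := Fintype.ofFinite H
  (Nat.card H : k)⁻¹ • ∑ h : H, of k G h

variable {H K L : Subgroup G} [Finite H] [Finite K] [Finite L]

theorem of_mul_average {g : G} (hg : g ∈ H) : of k G g * average H = average H := by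
  let := Fintype.ofFinite H
  rw [average, mul_smul_comm, mul_sum]
  congr 1
  exact Fintype.sum_equiv (Equiv.mulLeft ⟨g, hg⟩) _ _ (fun h => by simp)

theorem average_mul_eq_self_of_forall [CharZero k] {x : MonoidAlgebra k G}
    (hx : ∀ h ∈ H, of k G h * x = x) : average H * x = x := by
  let := Fintype.ofFinite H
  rw [average, smul_mul_assoc, sum_mul, sum_congr rfl fun h _ => hx h.1 h.2,
    sum_const, card_univ, Fintype.card_eq_nat_card, ← Nat.cast_smul_eq_nsmul k,
    smul_smul, inv_mul_cancel₀ (Nat.cast_ne_zero.2 Nat.card_pos.ne'), one_smul]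

theorem average_mul_average [CharZero k] (hHK : H ⊔ K = L) :
    average H * average K = (average L : MonoidAlgebra k G) := by
  have absorb (M : Subgroup G) [Finite M] (hM : M ≤ L) :
      average M * average L = (average L : MonoidAlgebra k G) :=
    average_mul_eq_self_of_forall fun h hh => of_mul_average (hM hh)
  have fixed :
      average L * (average H * average K) = (average H * average K : MonoidAlgebra k G) := by
    refine average_mul_eq_self_of_forall fun g hg => ?_
    obtain ⟨x, hx, y, hy, rfl⟩ := mem_sup.1 (hHK ▸ hg)
    rw [map_mul, mul_mul_mul_comm, of_mul_average hx, of_mul_average hy]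
  calc average H * average K = average L * (average H * average K) := fixed.symm
    _ = average H * average L * average K := by ring
    _ = average L := by rw [absorb H (hHK ▸ le_sup_left), mul_comm, absorb K (hHK ▸ le_sup_right)]

theorem coeff_average_one : (average H : MonoidAlgebra k G).coeff 1 = (Nat.card H : k)⁻¹ := by
  classical
  rw [average, coeff_smul_apply, coeff_sum, sum_apply']
  simp [of_apply, Finsupp.single_apply]

end Subgroup

theorem rootsOfUnity_sup_rootsOfUnity (M : Type*) [CommMonoid M] (a b : ℕ) :
    rootsOfUnity a M ⊔ rootsOfUnity b M = rootsOfUnity (a.lcm b) M := by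
  refine le_antisymm (sup_le (rootsOfUnity_le_of_dvd (Nat.dvd_lcm_left a b))
    (rootsOfUnity_le_of_dvd (Nat.dvd_lcm_right a b))) fun x hx => ?_
  rcases Nat.eq_zero_or_pos (a.gcd b) with hg | hg
  · obtain ⟨rfl, rfl⟩ := Nat.gcd_eq_zero_iff.1 hg
    simp [rootsOfUnity_zero]
  obtain ⟨g, a', b', -, hcop, rfl, rfl⟩ := Nat.exists_coprime' hg
  -- `x = x ^ (v b') * x ^ (u a')` with `u a' + v b' = 1` splits `x` into an `a`-th and a `b`-th
  -- root of unity.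
  obtain ⟨u, v, huv⟩ := Nat.isCoprime_iff_coprime.2 hcop
  rw [Nat.lcm_mul_right, hcop.lcm_eq_mul, mem_rootsOfUnity] at hx
  have root_of (c : ℤ) (m : ℕ) (hm : ((a' * b' * g : ℕ) : ℤ) ∣ c * m) :
      x ^ c ∈ rootsOfUnity m M := by
    obtain ⟨d, hd⟩ := hm
    rw [mem_rootsOfUnity, ← zpow_natCast, ← zpow_mul, hd, zpow_mul, zpow_natCast, hx, one_zpow]
  refine Subgroup.mem_sup.2 ⟨x ^ (v * b'), root_of _ _ ⟨v, by push_cast; ring⟩,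
    x ^ (u * a'), root_of _ _ ⟨u, by push_cast; ring⟩, ?_⟩
  rw [← zpow_add, add_comm, huv, zpow_one]

theorem isPrimitiveRoot_zetaU {j : ℕ} (hj : j ≠ 0) : IsPrimitiveRoot (zetaU j) j :=
  IsPrimitiveRoot.coe_units_iff.1 (Complex.isPrimitiveRoot_exp j hj)

theorem Eavg_eq_average (j : ℕ) [NeZero j] : Eavg j = Subgroup.average (rootsOfUnity j ℂ) := by
  let := Fintype.ofFinite (rootsOfUnity j ℂ)
  have hζ := isPrimitiveRoot_zetaU (NeZero.ne j)
  rw [Eavg, Subgroup.average, hζ.card_rootsOfUnity']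
  congr 1
  refine sum_bij (fun k _ => ⟨zetaU j ^ k, (mem_rootsOfUnity _ _).2 ?_⟩) (fun _ _ => mem_univ _)
    (fun k hk l hl hkl => hζ.pow_inj (mem_range.1 hk) (mem_range.1 hl) (congrArg Subtype.val hkl))
    (fun h _ => ?_) (fun _ _ => rfl)
  · rw [← pow_mul, mul_comm, pow_mul, hζ.pow_eq_one, one_pow]
  · obtain ⟨k, hk, hζk⟩ := (IsPrimitiveRoot.coe_units_iff.2 hζ).eq_pow_of_pow_eq_one
      ((mem_rootsOfUnity' _ _).1 h.2)
    exact ⟨k, mem_range.2 hk, Subtype.ext (Units.ext (by simpa using hζk))⟩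

theorem coeff_Eavg_one (j : ℕ) [NeZero j] : (Eavg j).coeff 1 = (j : ℚ)⁻¹ := by
  rw [Eavg_eq_average, Subgroup.coeff_average_one,
    (isPrimitiveRoot_zetaU (NeZero.ne j)).card_rootsOfUnity']

theorem Eavg_mul_Eavg (a b : ℕ) [NeZero a] [NeZero b] : Eavg a * Eavg b = Eavg (a.lcm b) := by
  have : NeZero (a.lcm b) := ⟨Nat.lcm_ne_zero (NeZero.ne a) (NeZero.ne b)⟩
  rw [Eavg_eq_average, Eavg_eq_average, Eavg_eq_average]
  exact Subgroup.average_mul_average (rootsOfUnity_sup_rootsOfUnity ℂ a b)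

theorem Eavg_one : Eavg 1 = 1 := by
  simp [Eavg, one_def]

theorem prod_Eavg {ι : Type*} [DecidableEq ι] (s : Finset ι) (a : ι → ℕ)
    (ha : ∀ i ∈ s, a i ≠ 0) :
    ∏ i ∈ s, Eavg (a i) = Eavg (s.lcm a) := by
  induction s using Finset.induction_on with
  | empty => simp [Eavg_one]
  | @insert i s hi ih =>
    rw [forall_mem_insert] at ha
    have : NeZero (a i) := ⟨ha.1⟩
    have : NeZero (s.lcm a) := ⟨by simpa [Finset.lcm_eq_zero_iff] using ha.2⟩
    rw [prod_insert hi, ih ha.2, Eavg_mul_Eavg, lcm_insert]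
    rfl

theorem prod_smul_sub_one {ι R A : Type*} [DecidableEq ι] [CommRing R] [CommRing A] [Algebra R A]
    (s : Finset ι) (c : ι → R) (x : ι → A) :
    ∏ i ∈ s, (c i • x i - 1) =
      ∑ t ∈ s.powerset, ((-1) ^ (#s - #t) * ∏ i ∈ t, c i) • ∏ i ∈ t, x i := by
  simp_rw [sub_eq_add_neg]
  refine (prod_add _ _ s).trans (sum_congr rfl fun t ht => ?_)
  rw [prod_const, card_sdiff_of_subset (mem_powerset.1 ht), prod_smul, Algebra.smul_def,
    Algebra.smul_def, map_mul, map_pow, map_neg, map_one]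
  ring

/-- The rank `κ` of the middle-dimensional homology of `Σ(a_0,…,a_n)`, i.e. the
coefficient of the identity group element `[1]` in `∏_{i=0}^n (a_i E_{a_i} - 1) ∈ ℚ[ℂ*]`,
equals `∑_{I_s ⊆ I} (-1)^{n+1-s} (∏_{i∈I_s} a_i) / lcm_{i∈I_s} a_i`. -/
theorem stmt6 (n : ℕ) (a : Fin (n + 1) → ℕ) (ha : ∀ i, 0 < a i) :
    ((∏ i, ((a i : ℚ) • Eavg (a i) - 1) : MonoidAlgebra ℚ ℂˣ).coeff : ℂˣ →₀ ℚ) (1 : ℂˣ) =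
      ∑ I ∈ (Finset.univ : Finset (Fin (n + 1))).powerset,
        (-1 : ℚ) ^ (n + 1 - I.card) * (∏ i ∈ I, (a i : ℚ)) / ((I.lcm a : ℕ) : ℚ) := by
  rw [prod_smul_sub_one, coeff_sum, sum_apply']
  refine sum_congr rfl fun I _ => ?_
  have : NeZero (I.lcm a) := ⟨by simp [Finset.lcm_eq_zero_iff, (ha _).ne']⟩
  rw [prod_Eavg I a fun i _ => (ha i).ne', coeff_smul_apply, coeff_Eavg_one, card_univ,
    Fintype.card_fin, smul_eq_mul, div_eq_mul_inv]
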